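/- arXiv:1910.02116 — 2 statements merged into one kernel-verified Lean document; each statement's English description precedes it below -/
import Mathlib

section
/- Let μ_0 be a probability measure on a Banach space X and let Φ : X × Y → ℝ satisfy: Φ(u;y) ≥ −M₁(r) and |Φ(u;y₁) − Φ(u;y₂)| ≤ M₂(r)·‖y₁−y₂‖ for all u ∈ X and y, y₁, y₂ in the ball B(0,r) of Y, where M₁(r), M₂(r) are constants (independent of u). Define μ^y by dμ^y/dμ_0(u) = Z(y)^{-1} exp(−Φ(u;y)) with Z(y) = ∫ exp(−Φ(u;y)) dμ_0(u). Then for every r > 0 there exists C(r) > 0 such that d_Hell(μ^{y₁}, μ^{y₂}) ≤ C(r)·‖y₁−y₂‖ for all y₁, y₂ ∈ B(0,r). -/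
open MeasureTheory

lemma exp_lip' {s t B : ℝ} (hs : s ≤ B) (ht : t ≤ B) :
    |Real.exp s - Real.exp t| ≤ Real.exp B * |s - t| := by
  wlog h : t ≤ s generalizing s t
  · rw [abs_sub_comm, abs_sub_comm s t]
    exact this ht hs (le_of_not_ge h)
  have h1 := Real.add_one_le_exp (t - s)
  have h2 : Real.exp (t - s) * Real.exp s = Real.exp t := by
    rw [← Real.exp_add]; ring_nf
  have h3 : Real.exp s ≤ Real.exp B := Real.exp_le_exp.mpr hs
  have h4 : Real.exp t ≤ Real.exp s := Real.exp_le_exp.mpr h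
  rw [abs_of_nonneg (by linarith), abs_of_nonneg (show (0:ℝ) ≤ s - t by linarith)]
  nlinarith [Real.exp_pos s, mul_le_mul_of_nonneg_right h1 (Real.exp_pos s).le]

lemma inv_sqrt_lip' {x y m : ℝ} (hm : 0 < m) (hx : m ≤ x) (hy : m ≤ y) :
    |1 / Real.sqrt x - 1 / Real.sqrt y| ≤ |x - y| / (2 * Real.sqrt m * m) := by
  have hsm : 0 < Real.sqrt m := Real.sqrt_pos.mpr hm
  have hsx : Real.sqrt m ≤ Real.sqrt x := Real.sqrt_le_sqrt hx
  have hsy : Real.sqrt m ≤ Real.sqrt y := Real.sqrt_le_sqrt hy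
  have hx0 : 0 < Real.sqrt x := lt_of_lt_of_le hsm hsx
  have hy0 : 0 < Real.sqrt y := lt_of_lt_of_le hsm hsy
  have hsqx := Real.sq_sqrt (hm.le.trans hx)
  have hsqy := Real.sq_sqrt (hm.le.trans hy)
  have key : |Real.sqrt x - Real.sqrt y| * (Real.sqrt x + Real.sqrt y) = |x - y| := by
    rw [← abs_of_pos (show (0:ℝ) < Real.sqrt x + Real.sqrt y by positivity), ← abs_mul]
    congr 1; nlinarith
  have hnum : |Real.sqrt x - Real.sqrt y| ≤ |x - y| / (2 * Real.sqrt m) := by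
    rw [le_div_iff₀ (by positivity), ← key]
    exact mul_le_mul_of_nonneg_left (by linarith) (abs_nonneg _)
  have heq : 1 / Real.sqrt x - 1 / Real.sqrt y
      = (Real.sqrt y - Real.sqrt x) / (Real.sqrt x * Real.sqrt y) := by
    field_simp
  rw [heq, abs_div, abs_of_pos (mul_pos hx0 hy0), abs_sub_comm]
  have hden : m ≤ Real.sqrt x * Real.sqrt y := by
    nlinarith [Real.mul_self_sqrt hm.le]
  calc |Real.sqrt x - Real.sqrt y| / (Real.sqrt x * Real.sqrt y)
      ≤ (|x - y| / (2 * Real.sqrt m)) / m :=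
        div_le_div₀ (by positivity) hnum hm hden
    _ = |x - y| / (2 * Real.sqrt m * m) := by rw [div_div]

/-- Well-posedness of the posterior μ^y defined by
dμ^y/dμ₀(u) = Z(y)⁻¹ exp(−Φ(u;y)), Z(y) = ∫ exp(−Φ(u;y)) dμ₀: if Φ(u;y) ≥ −M₁(r) and
|Φ(u;y₁)−Φ(u;y₂)| ≤ M₂(r)‖y₁−y₂‖ uniformly in u for y's in the ball of radius r, then
for every r > 0 there is C(r) > 0 with d_Hell(μ^{y₁}, μ^{y₂}) ≤ C(r)‖y₁−y₂‖ on B(0,r). -/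
theorem hellinger_wellposedness
    {X Y : Type*} [NormedAddCommGroup X] [NormedSpace ℝ X]
    [NormedAddCommGroup Y] [NormedSpace ℝ Y]
    [MeasurableSpace X] [BorelSpace X]
    (μ₀ : Measure X) [IsProbabilityMeasure μ₀]
    (Φ : X → Y → ℝ) (hΦmeas : ∀ y, Measurable fun u => Φ u y)
    (M₁ M₂ : ℝ → ℝ)
    (hlower : ∀ r > (0:ℝ), ∀ u : X, ∀ y : Y, ‖y‖ ≤ r → Φ u y ≥ -(M₁ r))
    (hlip : ∀ r > (0:ℝ), ∀ u : X, ∀ y₁ y₂ : Y, ‖y₁‖ ≤ r → ‖y₂‖ ≤ r →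
      |Φ u y₁ - Φ u y₂| ≤ M₂ r * ‖y₁ - y₂‖) :
    ∀ r > (0:ℝ), ∃ C > (0:ℝ), ∀ y₁ y₂ : Y, ‖y₁‖ ≤ r → ‖y₂‖ ≤ r →
      Real.sqrt ((1 / 2) * ∫ u,
          (Real.sqrt (Real.exp (-Φ u y₁) / (∫ v, Real.exp (-Φ v y₁) ∂μ₀)) -
            Real.sqrt (Real.exp (-Φ u y₂) / (∫ v, Real.exp (-Φ v y₂) ∂μ₀))) ^ 2 ∂μ₀) ≤
        C * ‖y₁ - y₂‖ := by
  intro r hr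
  set M := M₁ r with hM
  set K := max (M₂ r) 0 with hKdef
  have hK0 : (0:ℝ) ≤ K := le_max_right _ _
  have hlip' : ∀ u (y₁ y₂ : Y), ‖y₁‖ ≤ r → ‖y₂‖ ≤ r →
      |Φ u y₁ - Φ u y₂| ≤ K * ‖y₁ - y₂‖ := fun u y₁ y₂ h1 h2 =>
    (hlip r hr u y₁ y₂ h1 h2).trans
      (mul_le_mul_of_nonneg_right (le_max_left _ _) (norm_nonneg _))
  have hlow : ∀ u (y : Y), ‖y‖ ≤ r → -M ≤ Φ u y := fun u y hy => hlower r hr u y hy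
  -- integrability of densities
  have hint : ∀ y : Y, ‖y‖ ≤ r → Integrable (fun u => Real.exp (-Φ u y)) μ₀ := by
    intro y hy
    refine (integrable_const (Real.exp M)).mono'
      ((hΦmeas y).neg.exp.aestronglyMeasurable) (ae_of_all _ fun u => ?_)
    rw [Real.norm_eq_abs, abs_of_pos (Real.exp_pos _)]
    exact Real.exp_le_exp.mpr (by linarith [hlow u y hy])
  have h0r : ‖(0:Y)‖ ≤ r := by simpa using hr.le
  -- Z bounds
  have hZ0pos : 0 < ∫ v, Real.exp (-Φ v 0) ∂μ₀ := by
    rw [integral_pos_iff_support_of_nonneg_ae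
      (ae_of_all _ fun u => (Real.exp_pos _).le) (hint 0 h0r)]
    have : Function.support (fun u => Real.exp (-Φ u 0)) = Set.univ :=
      Set.eq_univ_of_forall fun u => (Real.exp_pos _).ne'
    simp [this]
  set m := Real.exp (-(K * r)) * ∫ v, Real.exp (-Φ v 0) ∂μ₀ with hmdef
  have hmpos : 0 < m := mul_pos (Real.exp_pos _) hZ0pos
  have hZge : ∀ y : Y, ‖y‖ ≤ r → m ≤ ∫ v, Real.exp (-Φ v y) ∂μ₀ := by
    intro y hy
    have hpt : ∀ u, Real.exp (-(K * r)) * Real.exp (-Φ u 0) ≤ Real.exp (-Φ u y) := by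
      intro u
      rw [← Real.exp_add]
      refine Real.exp_le_exp.mpr ?_
      have h := abs_le.mp (hlip' u y 0 hy h0r)
      have hyr : K * ‖y - 0‖ ≤ K * r := by
        refine mul_le_mul_of_nonneg_left ?_ hK0
        simpa using hy
      linarith [h.2]
    calc m = ∫ v, Real.exp (-(K * r)) * Real.exp (-Φ v 0) ∂μ₀ := by
            rw [integral_const_mul]
      _ ≤ ∫ v, Real.exp (-Φ v y) ∂μ₀ :=
            integral_mono ((hint 0 h0r).const_mul _) (hint y hy) hpt
  have hZle : ∀ y : Y, ‖y‖ ≤ r → (∫ v, Real.exp (-Φ v y) ∂μ₀) ≤ Real.exp M := by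
    intro y hy
    calc (∫ v, Real.exp (-Φ v y) ∂μ₀) ≤ ∫ _, Real.exp M ∂μ₀ :=
          integral_mono (hint y hy) (integrable_const _)
            (fun u => Real.exp_le_exp.mpr (by linarith [hlow u y hy]))
      _ = Real.exp M := by simp
  have hsm : 0 < Real.sqrt m := Real.sqrt_pos.mpr hmpos
  set L := Real.exp (M / 2) * K / (2 * Real.sqrt m)
    + Real.exp (M / 2) * (Real.exp M * K) / (2 * Real.sqrt m * m) with hLdef
  have hL0 : 0 ≤ L := by positivity
  refine ⟨L + 1, by positivity, ?_⟩
  intro y₁ y₂ h1 h2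
  set Z₁ := ∫ v, Real.exp (-Φ v y₁) ∂μ₀ with hZ1
  set Z₂ := ∫ v, Real.exp (-Φ v y₂) ∂μ₀ with hZ2
  have hZ1m : m ≤ Z₁ := hZge y₁ h1
  have hZ2m : m ≤ Z₂ := hZge y₂ h2
  have hZ1p : 0 < Z₁ := lt_of_lt_of_le hmpos hZ1m
  have hZ2p : 0 < Z₂ := lt_of_lt_of_le hmpos hZ2m
  -- bound on |Z₁ - Z₂|
  have hZdiff : |Z₁ - Z₂| ≤ Real.exp M * K * ‖y₁ - y₂‖ := by
    have hsub : Z₁ - Z₂ = ∫ u, (Real.exp (-Φ u y₁) - Real.exp (-Φ u y₂)) ∂μ₀ :=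
      (integral_sub (hint y₁ h1) (hint y₂ h2)).symm
    have hb : ∀ u, ‖Real.exp (-Φ u y₁) - Real.exp (-Φ u y₂)‖
        ≤ Real.exp M * K * ‖y₁ - y₂‖ := by
      intro u
      rw [Real.norm_eq_abs]
      calc |Real.exp (-Φ u y₁) - Real.exp (-Φ u y₂)|
          ≤ Real.exp M * |(-Φ u y₁) - (-Φ u y₂)| :=
            exp_lip' (by linarith [hlow u y₁ h1]) (by linarith [hlow u y₂ h2])
        _ ≤ Real.exp M * (K * ‖y₁ - y₂‖) := by
            refine mul_le_mul_of_nonneg_left ?_ (Real.exp_pos M).le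
            have := hlip' u y₁ y₂ h1 h2
            rw [show -Φ u y₁ - -Φ u y₂ = -(Φ u y₁ - Φ u y₂) by ring, abs_neg]
            exact this
        _ = Real.exp M * K * ‖y₁ - y₂‖ := by ring
    calc |Z₁ - Z₂| = ‖∫ u, (Real.exp (-Φ u y₁) - Real.exp (-Φ u y₂)) ∂μ₀‖ := by
          rw [hsub, Real.norm_eq_abs]
      _ ≤ (Real.exp M * K * ‖y₁ - y₂‖) * (μ₀ Set.univ).toReal :=
          norm_integral_le_of_norm_le_const (ae_of_all _ hb)
      _ = Real.exp M * K * ‖y₁ - y₂‖ := by simp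
  -- pointwise bound on the sqrt densities
  have hptw : ∀ u, |Real.sqrt (Real.exp (-Φ u y₁) / Z₁)
      - Real.sqrt (Real.exp (-Φ u y₂) / Z₂)| ≤ L * ‖y₁ - y₂‖ := by
    intro u
    have e1 : Real.sqrt (Real.exp (-Φ u y₁) / Z₁)
        = Real.exp (-Φ u y₁ / 2) * (1 / Real.sqrt Z₁) := by
      rw [Real.sqrt_div (Real.exp_pos _).le, ← Real.exp_half]
      ring
    have e2 : Real.sqrt (Real.exp (-Φ u y₂) / Z₂)
        = Real.exp (-Φ u y₂ / 2) * (1 / Real.sqrt Z₂) := by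
      rw [Real.sqrt_div (Real.exp_pos _).le, ← Real.exp_half]
      ring
    rw [e1, e2]
    set a := Real.exp (-Φ u y₁ / 2) with ha
    set b := Real.exp (-Φ u y₂ / 2) with hb
    have split : a * (1 / Real.sqrt Z₁) - b * (1 / Real.sqrt Z₂)
        = (a - b) * (1 / Real.sqrt Z₁) + b * (1 / Real.sqrt Z₁ - 1 / Real.sqrt Z₂) := by
      ring
    rw [split]
    have T1 : |(a - b) * (1 / Real.sqrt Z₁)|
        ≤ (Real.exp (M / 2) * (K * ‖y₁ - y₂‖) / 2) * (1 / Real.sqrt m) := by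
      rw [abs_mul]
      refine mul_le_mul ?_ ?_ (abs_nonneg _) (by positivity)
      · calc |a - b| ≤ Real.exp (M / 2) * |(-Φ u y₁ / 2) - (-Φ u y₂ / 2)| :=
              exp_lip' (by linarith [hlow u y₁ h1]) (by linarith [hlow u y₂ h2])
          _ = Real.exp (M / 2) * (|Φ u y₁ - Φ u y₂| / 2) := by
              rw [show -Φ u y₁ / 2 - -Φ u y₂ / 2 = -((Φ u y₁ - Φ u y₂) / 2) by ring,
                abs_neg, abs_div]
              norm_num
          _ ≤ Real.exp (M / 2) * (K * ‖y₁ - y₂‖ / 2) := by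
              refine mul_le_mul_of_nonneg_left ?_ (Real.exp_pos _).le
              linarith [hlip' u y₁ y₂ h1 h2]
          _ = Real.exp (M / 2) * (K * ‖y₁ - y₂‖) / 2 := by ring
      · rw [abs_of_pos (by positivity)]
        exact one_div_le_one_div_of_le hsm (Real.sqrt_le_sqrt hZ1m)
    have T2 : |b * (1 / Real.sqrt Z₁ - 1 / Real.sqrt Z₂)|
        ≤ Real.exp (M / 2) * (Real.exp M * K * ‖y₁ - y₂‖ / (2 * Real.sqrt m * m)) := by
      rw [abs_mul]
      refine mul_le_mul ?_ ?_ (abs_nonneg _) (Real.exp_pos _).le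
      · rw [hb, abs_of_pos (Real.exp_pos _)]
        exact Real.exp_le_exp.mpr (by linarith [hlow u y₂ h2])
      · calc |1 / Real.sqrt Z₁ - 1 / Real.sqrt Z₂|
            ≤ |Z₁ - Z₂| / (2 * Real.sqrt m * m) := inv_sqrt_lip' hmpos hZ1m hZ2m
          _ ≤ Real.exp M * K * ‖y₁ - y₂‖ / (2 * Real.sqrt m * m) :=
              div_le_div_of_nonneg_right hZdiff (by positivity) |>.trans_eq rfl
    calc |(a - b) * (1 / Real.sqrt Z₁) + b * (1 / Real.sqrt Z₁ - 1 / Real.sqrt Z₂)|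
        ≤ |(a - b) * (1 / Real.sqrt Z₁)| + |b * (1 / Real.sqrt Z₁ - 1 / Real.sqrt Z₂)| :=
          abs_add_le _ _
      _ ≤ (Real.exp (M / 2) * (K * ‖y₁ - y₂‖) / 2) * (1 / Real.sqrt m)
          + Real.exp (M / 2) * (Real.exp M * K * ‖y₁ - y₂‖ / (2 * Real.sqrt m * m)) :=
          add_le_add T1 T2
      _ = L * ‖y₁ - y₂‖ := by rw [hLdef]; field_simp
  -- integrate the squared pointwise bound
  have hintle : (∫ u, (Real.sqrt (Real.exp (-Φ u y₁) / Z₁)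
      - Real.sqrt (Real.exp (-Φ u y₂) / Z₂)) ^ 2 ∂μ₀) ≤ (L * ‖y₁ - y₂‖) ^ 2 := by
    calc (∫ u, (Real.sqrt (Real.exp (-Φ u y₁) / Z₁)
          - Real.sqrt (Real.exp (-Φ u y₂) / Z₂)) ^ 2 ∂μ₀)
        ≤ ∫ _, (L * ‖y₁ - y₂‖) ^ 2 ∂μ₀ := by
          refine integral_mono_of_nonneg (ae_of_all _ fun u => sq_nonneg _)
            (integrable_const _) (ae_of_all _ fun u => ?_)
          have h := hptw u
          calc (Real.sqrt (Real.exp (-Φ u y₁) / Z₁)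
                - Real.sqrt (Real.exp (-Φ u y₂) / Z₂)) ^ 2
              = |Real.sqrt (Real.exp (-Φ u y₁) / Z₁)
                - Real.sqrt (Real.exp (-Φ u y₂) / Z₂)| ^ 2 := (sq_abs _).symm
            _ ≤ (L * ‖y₁ - y₂‖) ^ 2 := pow_le_pow_left₀ (abs_nonneg _) h 2
      _ = (L * ‖y₁ - y₂‖) ^ 2 := by simp
  have hfin : (1 / 2 : ℝ) * (∫ u, (Real.sqrt (Real.exp (-Φ u y₁) / Z₁)
      - Real.sqrt (Real.exp (-Φ u y₂) / Z₂)) ^ 2 ∂μ₀) ≤ ((L + 1) * ‖y₁ - y₂‖) ^ 2 := by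
    have h1' : (L * ‖y₁ - y₂‖) ^ 2 ≤ ((L + 1) * ‖y₁ - y₂‖) ^ 2 := by
      have : L * ‖y₁ - y₂‖ ≤ (L + 1) * ‖y₁ - y₂‖ :=
        mul_le_mul_of_nonneg_right (by linarith) (norm_nonneg _)
      exact pow_le_pow_left₀ (by positivity) this 2
    have hInn : 0 ≤ ∫ u, (Real.sqrt (Real.exp (-Φ u y₁) / Z₁)
        - Real.sqrt (Real.exp (-Φ u y₂) / Z₂)) ^ 2 ∂μ₀ :=
      integral_nonneg fun u => sq_nonneg _
    calc (1 / 2 : ℝ) * (∫ u, (Real.sqrt (Real.exp (-Φ u y₁) / Z₁)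
          - Real.sqrt (Real.exp (-Φ u y₂) / Z₂)) ^ 2 ∂μ₀)
        ≤ 1 * (∫ u, (Real.sqrt (Real.exp (-Φ u y₁) / Z₁)
          - Real.sqrt (Real.exp (-Φ u y₂) / Z₂)) ^ 2 ∂μ₀) :=
          mul_le_mul_of_nonneg_right (by norm_num) hInn
      _ = ∫ u, (Real.sqrt (Real.exp (-Φ u y₁) / Z₁)
          - Real.sqrt (Real.exp (-Φ u y₂) / Z₂)) ^ 2 ∂μ₀ := one_mul _
      _ ≤ (L * ‖y₁ - y₂‖) ^ 2 := hintle
      _ ≤ ((L + 1) * ‖y₁ - y₂‖) ^ 2 := h1'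
  calc Real.sqrt ((1 / 2) * ∫ u, (Real.sqrt (Real.exp (-Φ u y₁) / Z₁)
        - Real.sqrt (Real.exp (-Φ u y₂) / Z₂)) ^ 2 ∂μ₀)
      ≤ Real.sqrt (((L + 1) * ‖y₁ - y₂‖) ^ 2) := Real.sqrt_le_sqrt hfin
    _ = (L + 1) * ‖y₁ - y₂‖ := Real.sqrt_sq (by positivity)
end

section
/- Let r be exponentially distributed with mean m, let g₁, g₂ ∼ N(0,1) be independent of r and of each other, let 0 < ρ < 1 and set ρ̄ = sqrt((1−ρ²)/2·m). Define r* = (ρ√r + ρ̄g₁)² + (ρ̄g₂)². Then E[r*] = E[r] = m and, for the case m = 2, Var(r*) = Var(r) = 4. -/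
/-!
Put `X = ρ √r` and `ρ̄ = √(1 - ρ²)`. Since `r`, `g₁`, `g₂` are independent and the Gaussian moments
of orders `1, 2, 3, 4` are `0, 1, 0, 3`, expanding `r* = (X + ρ̄ g₁)² + (ρ̄ g₂)²` gives
`E r* = E X² + 2ρ̄²` and `Var r* = Var X² + 4ρ̄² E X² + 4ρ̄⁴`. As `X² = ρ² r` with `E r = 2` and
`Var r = 4`, these are `2ρ² + 2ρ̄² = 2` and `4ρ⁴ + 8ρ²ρ̄² + 4ρ̄⁴ = 4(ρ² + ρ̄²)² = 4`.
-/

open MeasureTheory ProbabilityTheory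
open Real Set
open scoped NNReal ENNReal Nat

section IndependentSums

variable {Ω : Type*} [MeasurableSpace Ω] {μ : Measure Ω} {X Y : Ω → ℝ} {n k : ℕ}

lemma MeasureTheory.MemLp.integrable_pow_of_le [IsFiniteMeasure μ] (hX : MemLp X n μ)
    (hk : k ≤ n) : Integrable (fun ω => X ω ^ k) μ :=
  (hX.mono_exponent (by exact_mod_cast hk)).integrable_norm_pow'.mono'
    (hX.aestronglyMeasurable.pow k) (.of_forall fun ω => by simp [norm_pow])

lemma MeasureTheory.MemLp.sq_of_four [IsFiniteMeasure μ] (hX : MemLp X 4 μ) :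
    MemLp (fun ω => X ω ^ 2) 2 μ :=
  (memLp_two_iff_integrable_sq (hX.aestronglyMeasurable.pow 2)).2 <| by
    simpa only [Pi.pow_apply, ← pow_mul] using hX.integrable_pow_of_le (k := 4) le_rfl

lemma MeasureTheory.MemLp.sqrt {p : ℝ≥0∞} (hX : MemLp X p μ) :
    MemLp (fun ω => √(X ω)) (p * 2) μ := by
  have hm : AEStronglyMeasurable (fun ω => √(X ω)) μ :=
    continuous_sqrt.comp_aestronglyMeasurable hX.1
  rw [← memLp_norm_rpow_iff (q := 2) hm two_ne_zero ENNReal.ofNat_ne_top,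
    ENNReal.mul_div_cancel_right two_ne_zero ENNReal.ofNat_ne_top]
  refine hX.mono (hm.norm.aemeasurable.pow_const _).aestronglyMeasurable (.of_forall fun ω => ?_)
  simp [Real.sq_sqrt', abs_le, le_abs_self, neg_abs_le]

lemma variance_sq_eq_sub [IsProbabilityMeasure μ] (hX : MemLp X 4 μ) :
    Var[fun ω => X ω ^ 2; μ] = ∫ ω, X ω ^ 4 ∂μ - (∫ ω, X ω ^ 2 ∂μ) ^ 2 := by
  rw [variance_eq_sub hX.sq_of_four]
  simp only [Pi.pow_apply, ← pow_mul]

theorem ProbabilityTheory.IndepFun.integral_add_pow [IsFiniteMeasure μ] (hXY : X ⟂ᵢ[μ] Y)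
    (hX : MemLp X n μ) (hY : MemLp Y n μ) :
    ∫ ω, (X ω + Y ω) ^ n ∂μ =
      ∑ k ∈ Finset.range (n + 1), (∫ ω, X ω ^ k ∂μ) * (∫ ω, Y ω ^ (n - k) ∂μ) * n.choose k := by
  have hpow (k : ℕ) : (fun ω => X ω ^ k) ⟂ᵢ[μ] fun ω => Y ω ^ (n - k) :=
    hXY.comp (measurable_id.pow_const k) (measurable_id.pow_const (n - k))
  have hterm (k : ℕ) (hk : k ∈ Finset.range (n + 1)) :
      Integrable (fun ω => X ω ^ k * Y ω ^ (n - k) * n.choose k) μ :=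
    ((hpow k).integrable_mul (hX.integrable_pow_of_le (Finset.mem_range_succ_iff.1 hk))
      (hY.integrable_pow_of_le (Nat.sub_le n k))).mul_const _
  simp_rw [add_pow]
  rw [integral_finsetSum _ hterm]
  refine Finset.sum_congr rfl fun k _ => ?_
  rw [integral_mul_const, (hpow k).integral_fun_mul_eq_mul_integral
    (hX.aestronglyMeasurable.pow k) (hY.aestronglyMeasurable.pow _)]

lemma ProbabilityTheory.HasLaw.integral_pow {ν : Measure ℝ} (hX : HasLaw X ν μ) (k : ℕ) :
    ∫ ω, X ω ^ k ∂μ = ∫ x, x ^ k ∂ν :=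
  hX.integral_comp (f := fun x => x ^ k) (by fun_prop)

end IndependentSums

section Gaussian

variable {v : ℝ≥0} {n : ℕ}

lemma integral_pow_gaussianReal_of_odd (hn : Odd n) : ∫ x, x ^ n ∂gaussianReal 0 v = 0 := by
  have hsymm : ∫ x, x ^ n ∂gaussianReal 0 v = ∫ x, (-x) ^ n ∂gaussianReal 0 v := by
    conv_lhs => rw [← neg_zero, ← gaussianReal_map_neg]
    exact integral_map (by fun_prop) (by fun_prop)
  simp only [hn.neg_pow, integral_neg] at hsymm
  linarith

lemma integral_sq_gaussianReal (m : ℝ) : ∫ x, x ^ 2 ∂gaussianReal m v = m ^ 2 + v := by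
  have h := variance_id_gaussianReal (μ := m) (v := v)
  rw [variance_eq_sub (memLp_id_gaussianReal 2)] at h
  simp only [Pi.pow_apply, id, integral_id_gaussianReal] at h
  linarith

lemma integral_pow_gaussianReal_const_mul (m c : ℝ) :
    ∫ x, x ^ n ∂gaussianReal (c * m) (.mk (c ^ 2) (sq_nonneg _) * v) =
      c ^ n * ∫ x, x ^ n ∂gaussianReal m v := by
  rw [← gaussianReal_map_const_mul, integral_map (by fun_prop) (by fun_prop),
    ← integral_const_mul]
  simp_rw [mul_pow]

/-- For independent `X, Y ∼ 𝓝(0, v)`, the law of `X + Y` is `𝓝(0, 2v)`, whose fourth moment is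
`4 m₄` by scaling, while expanding `(X + Y)⁴` gives `2 m₄ + 6 v²`. -/
lemma integral_pow_four_gaussianReal : ∫ x, x ^ 4 ∂gaussianReal 0 v = 3 * v ^ 2 := by
  set P := (gaussianReal 0 v).prod (gaussianReal 0 v)
  have hfst : HasLaw Prod.fst (gaussianReal 0 v) P := measurePreserving_fst.hasLaw
  have hsnd : HasLaw Prod.snd (gaussianReal 0 v) P := measurePreserving_snd.hasLaw
  have hindep : Prod.fst ⟂ᵢ[P] Prod.snd :=
    indepFun_prod (μ := gaussianReal 0 v) (ν := gaussianReal 0 v) (X := id) (Y := id)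
      measurable_id measurable_id
  -- `0 + 0` is not unfolded to `0` cheaply on `ℝ`, so the mean is rewritten by hand.
  have hsum : HasLaw (fun p : ℝ × ℝ => p.1 + p.2) (gaussianReal 0 (v + v)) P :=
    ⟨by fun_prop, by
      rw [← add_zero (0 : ℝ)]
      exact gaussianReal_add_gaussianReal_of_indepFun hindep hfst.map_eq hsnd.map_eq⟩
  have hscale :
      gaussianReal 0 (v + v) = gaussianReal (√2 * 0) (.mk (√2 ^ 2) (sq_nonneg _) * v) := by
    congr 1
    · simp
    · ext
      simp only [NNReal.coe_add, NNReal.coe_mul, NNReal.coe_mk, sq_sqrt zero_le_two]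
      ring
  have h4 : ∫ x, x ^ 4 ∂gaussianReal 0 (v + v) = 4 * ∫ x, x ^ 4 ∂gaussianReal 0 v := by
    rw [hscale, integral_pow_gaussianReal_const_mul, show (4 : ℕ) = 2 * 2 from rfl, pow_mul,
      sq_sqrt zero_le_two]
    norm_num
  have hbinom := hindep.integral_add_pow (n := 4) (hfst.hasGaussianLaw.memLp (by norm_num))
    (hsnd.hasGaussianLaw.memLp (by norm_num))
  rw [hsum.integral_pow, h4] at hbinom
  simp only [Finset.sum_range_succ, Finset.sum_range_zero, hfst.integral_pow, hsnd.integral_pow,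
    integral_pow_gaussianReal_of_odd odd_one, integral_pow_gaussianReal_of_odd (by decide : Odd 3),
    integral_sq_gaussianReal] at hbinom
  norm_num [Nat.choose] at hbinom
  linarith

end Gaussian

section Exponential

variable {a : ℝ}

lemma ae_nonneg_expMeasure : ∀ᵐ x ∂expMeasure a, 0 ≤ x := by
  rw [ae_iff]
  simp only [not_le]
  change (volume.withDensity (gammaPDF 1 a)) (Iio 0) = 0
  rw [withDensity_apply _ measurableSet_Iio]
  exact lintegral_gammaPDF_of_nonpos le_rfl

lemma integral_pow_expMeasure (ha : 0 < a) (n : ℕ) :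
    ∫ x, x ^ n ∂expMeasure a = n ! / a ^ n := by
  have hdens : ∫ x, x ^ n ∂expMeasure a = ∫ x, exponentialPDFReal a x * x ^ n := by
    rw [expMeasure, gammaMeasure, integral_withDensity_eq_integral_toReal_smul (f := gammaPDF 1 a)
      (measurable_gammaPDFReal 1 a).ennreal_ofReal (.of_forall fun _ => ENNReal.ofReal_lt_top)]
    simp only [gammaPDF, ENNReal.toReal_ofReal (gammaPDFReal_nonneg one_pos ha _), smul_eq_mul,
      exponentialPDFReal]
  have hsupp : ∫ x, exponentialPDFReal a x * x ^ n =
      ∫ x in Ioi 0, a * (x ^ ((n + 1 : ℝ) - 1) * exp (-(a * x))) := by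
    rw [← setIntegral_eq_integral_of_forall_compl_eq_zero (s := Ici 0) fun x hx => by
        simp [exponentialPDFReal, gammaPDFReal, (notMem_Ici.1 hx).not_ge],
      integral_Ici_eq_integral_Ioi]
    refine setIntegral_congr_fun measurableSet_Ioi fun x hx => ?_
    simp only [exponentialPDFReal, gammaPDFReal, (mem_Ioi.1 hx).le, ↓reduceIte, rpow_one,
      Gamma_one, div_one, sub_self, rpow_zero, mul_one, add_sub_cancel_right, rpow_natCast]
    ring
  rw [hdens, hsupp, integral_const_mul, integral_rpow_mul_exp_neg_mul_Ioi (by positivity) ha,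
    Gamma_nat_eq_factorial, ← Nat.cast_succ, rpow_natCast, one_div, inv_pow, pow_succ]
  field_simp

lemma integrable_pow_expMeasure (ha : 0 < a) (n : ℕ) :
    Integrable (fun x => x ^ n) (expMeasure a) :=
  .of_integral_ne_zero <| by rw [integral_pow_expMeasure ha]; positivity

lemma integral_id_expMeasure (ha : 0 < a) : ∫ x, x ∂expMeasure a = a⁻¹ := by
  simpa using integral_pow_expMeasure ha 1

lemma variance_id_expMeasure (ha : 0 < a) : Var[id; expMeasure a] = (a ^ 2)⁻¹ := by
  have := isProbabilityMeasure_expMeasure ha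
  rw [variance_eq_sub ((memLp_two_iff_integrable_sq aestronglyMeasurable_id).2
    (integrable_pow_expMeasure ha 2))]
  simp only [Pi.pow_apply, id, integral_pow_expMeasure ha, integral_id_expMeasure ha]
  field_simp
  norm_num

end Exponential

section GaussianNoise

variable {Ω : Type*} [MeasurableSpace Ω] {μ : Measure Ω} [IsProbabilityMeasure μ]
  {X Y Z : Ω → ℝ} {v : ℝ≥0}

lemma integral_add_sq_add_sq (hX : MemLp X 4 μ) (hY : HasLaw Y (gaussianReal 0 v) μ)
    (hZ : HasLaw Z (gaussianReal 0 v) μ) (hXY : X ⟂ᵢ[μ] Y) :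
    ∫ ω, (X ω + Y ω) ^ 2 + Z ω ^ 2 ∂μ = ∫ ω, X ω ^ 2 ∂μ + 2 * v := by
  have hY4 : MemLp Y 4 μ := hY.hasGaussianLaw.memLp (by norm_num)
  have hZ4 : MemLp Z 4 μ := hZ.hasGaussianLaw.memLp (by norm_num)
  have hXY4 : MemLp (fun ω => X ω + Y ω) 4 μ := hX.add hY4
  rw [integral_add (hXY4.integrable_pow_of_le (by norm_num))
    (hZ4.integrable_pow_of_le (by norm_num)), hXY.integral_add_pow (hX.mono_exponent (by norm_num))
    (hY4.mono_exponent (by norm_num))]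
  simp only [Finset.sum_range_succ, Finset.sum_range_zero, hY.integral_pow, hZ.integral_pow,
    integral_sq_gaussianReal]
  norm_num
  ring

lemma variance_add_sq_add_sq (hX : MemLp X 4 μ) (hY : HasLaw Y (gaussianReal 0 v) μ)
    (hZ : HasLaw Z (gaussianReal 0 v) μ) (hXY : X ⟂ᵢ[μ] Y)
    (hXYZ : (fun ω => (X ω, Y ω)) ⟂ᵢ[μ] Z) :
    Var[fun ω => (X ω + Y ω) ^ 2 + Z ω ^ 2; μ] =
      Var[fun ω => X ω ^ 2; μ] + 4 * v * ∫ ω, X ω ^ 2 ∂μ + 4 * v ^ 2 := by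
  have hY4 : MemLp Y 4 μ := hY.hasGaussianLaw.memLp (by norm_num)
  have hZ4 : MemLp Z 4 μ := hZ.hasGaussianLaw.memLp (by norm_num)
  have hXY4 : MemLp (fun ω => X ω + Y ω) 4 μ := hX.add hY4
  have hind : (fun ω => (X ω + Y ω) ^ 2) ⟂ᵢ[μ] fun ω => Z ω ^ 2 :=
    hXYZ.comp (by fun_prop : Measurable fun p : ℝ × ℝ => (p.1 + p.2) ^ 2)
      (by fun_prop : Measurable fun z : ℝ => z ^ 2)
  have hsplit : Var[fun ω => (X ω + Y ω) ^ 2 + Z ω ^ 2; μ] =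
      Var[fun ω => (X ω + Y ω) ^ 2; μ] + Var[fun ω => Z ω ^ 2; μ] :=
    hind.variance_add hXY4.sq_of_four hZ4.sq_of_four
  rw [hsplit, variance_sq_eq_sub hXY4, variance_sq_eq_sub hZ4, variance_sq_eq_sub hX,
    hXY.integral_add_pow hX hY4, hXY.integral_add_pow (hX.mono_exponent (by norm_num))
    (hY4.mono_exponent (by norm_num))]
  simp only [Finset.sum_range_succ, Finset.sum_range_zero, hY.integral_pow, hZ.integral_pow,
    integral_sq_gaussianReal, integral_pow_four_gaussianReal,
    integral_pow_gaussianReal_of_odd (by decide : Odd 3)]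
  norm_num [Nat.choose]
  ring

lemma integral_and_variance_proposal {R g₁ g₂ : Ω → ℝ} (hR : MemLp R 2 μ)
    (hR0 : ∀ᵐ ω ∂μ, 0 ≤ R ω) (h₁ : HasLaw g₁ (gaussianReal 0 1) μ)
    (h₂ : HasLaw g₂ (gaussianReal 0 1) μ) (hindep : iIndepFun ![R, g₁, g₂] μ) (a c : ℝ) :
    ∫ ω, (a * √(R ω) + c * g₁ ω) ^ 2 + (c * g₂ ω) ^ 2 ∂μ = a ^ 2 * ∫ ω, R ω ∂μ + 2 * c ^ 2 ∧
    Var[fun ω => (a * √(R ω) + c * g₁ ω) ^ 2 + (c * g₂ ω) ^ 2; μ] =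
      a ^ 4 * Var[R; μ] + 4 * c ^ 2 * a ^ 2 * ∫ ω, R ω ∂μ + 4 * c ^ 4 := by
  have hX : MemLp (fun ω => a * √(R ω)) 4 μ := by
    simpa [show (2 * 2 : ℝ≥0∞) = 4 by norm_num] using hR.sqrt.const_mul a
  have hsq : (fun ω => (a * √(R ω)) ^ 2) =ᵐ[μ] fun ω => a ^ 2 * R ω := by
    filter_upwards [hR0] with ω hω
    rw [mul_pow, sq_sqrt hω]
  have hY := gaussianReal_const_mul h₁ c
  have hZ := gaussianReal_const_mul h₂ c
  rw [mul_zero] at hY hZ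
  have hmeas : ∀ i, AEMeasurable (![R, g₁, g₂] i) μ := fun i => by
    fin_cases i
    exacts [hR.aemeasurable, h₁.aemeasurable, h₂.aemeasurable]
  have hXY : (fun ω => a * √(R ω)) ⟂ᵢ[μ] fun ω => c * g₁ ω :=
    (hindep.indepFun (i := 0) (j := 1) (by decide)).comp
      (by fun_prop : Measurable fun x => a * √x) (by fun_prop : Measurable fun y => c * y)
  have hXYZ : (fun ω => (a * √(R ω), c * g₁ ω)) ⟂ᵢ[μ] fun ω => c * g₂ ω :=
    (hindep.indepFun_prodMk₀ hmeas 0 1 2 (by decide) (by decide)).comp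
      (by fun_prop : Measurable fun p : ℝ × ℝ => (a * √p.1, c * p.2))
      (by fun_prop : Measurable fun z => c * z)
  rw [integral_add_sq_add_sq hX hY hZ hXY, variance_add_sq_add_sq hX hY hZ hXY hXYZ,
    variance_congr hsq, variance_const_mul, integral_congr_ae hsq, integral_const_mul]
  simp only [NNReal.coe_mk, mul_one, true_and]
  ring

end GaussianNoise

/-- Let r ∼ Exp(rate 1/2) (mean 2), g₁, g₂ ∼ N(0,1), all independent,
0 < ρ < 1, ρ̄ = √(1−ρ²), and r* = (ρ√r + ρ̄g₁)² + (ρ̄g₂)². Then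
E[r*] = E[r] = 2 and Var(r*) = Var(r) = 4. -/
theorem exponential_proposal_moments
    {Ω : Type*} [MeasurableSpace Ω] (μ : Measure Ω) [IsProbabilityMeasure μ]
    (r g₁ g₂ : Ω → ℝ) (hrm : Measurable r) (h₁m : Measurable g₁) (h₂m : Measurable g₂)
    (hr : Measure.map r μ = expMeasure (1 / 2))
    (h₁ : Measure.map g₁ μ = gaussianReal 0 1)
    (h₂ : Measure.map g₂ μ = gaussianReal 0 1)
    (hindep : iIndepFun ![r, g₁, g₂] μ)
    (ρ : ℝ) (hρ : 0 < ρ) (hρ1 : ρ < 1) :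
    (∫ ω, ((ρ * Real.sqrt (r ω) + Real.sqrt (1 - ρ ^ 2) * g₁ ω) ^ 2 +
        (Real.sqrt (1 - ρ ^ 2) * g₂ ω) ^ 2) ∂μ = ∫ ω, r ω ∂μ) ∧
    (∫ ω, r ω ∂μ = 2) ∧
    (variance (fun ω => (ρ * Real.sqrt (r ω) + Real.sqrt (1 - ρ ^ 2) * g₁ ω) ^ 2 +
        (Real.sqrt (1 - ρ ^ 2) * g₂ ω) ^ 2) μ = variance r μ) ∧
    (variance r μ = 4) := by
  have hc : √(1 - ρ ^ 2) ^ 2 = 1 - ρ ^ 2 := sq_sqrt (by nlinarith)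
  have hR : HasLaw r (expMeasure (1 / 2)) μ := ⟨hrm.aemeasurable, hr⟩
  have hEr : ∫ ω, r ω ∂μ = 2 := by
    rw [hR.integral_eq, integral_id_expMeasure (by norm_num)]; norm_num
  have hVr : variance r μ = 4 := by
    rw [hR.variance_eq, variance_id_expMeasure (by norm_num)]; norm_num
  have hr2 : MemLp r 2 μ := (memLp_two_iff_integrable_sq hrm.aestronglyMeasurable).2 <|
    (integrable_map_measure (g := fun x => x ^ 2) (by fun_prop) hrm.aemeasurable).1
      (hr ▸ integrable_pow_expMeasure (by norm_num) 2)
  obtain ⟨hmean, hvar⟩ := integral_and_variance_proposal hr2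
    (ae_of_ae_map hrm.aemeasurable (hr ▸ ae_nonneg_expMeasure)) ⟨h₁m.aemeasurable, h₁⟩
    ⟨h₂m.aemeasurable, h₂⟩ hindep ρ √(1 - ρ ^ 2)
  refine ⟨?_, hEr, ?_, hVr⟩
  · rw [hmean, hEr, hc]
    ring
  · rw [hvar, hVr, hEr, show √(1 - ρ ^ 2) ^ 4 = (√(1 - ρ ^ 2) ^ 2) ^ 2 by ring, hc]
    ring
end
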